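/- Let u be an aperiodic uniformly recurrent infinite word. If there exist infinitely many factors w of u such that R(|w|) = |w|·ind(w) + 1, then u is Sturmian (i.e., C(n) = n+1 for all n). -/

import Mathlib

open Filter Topology

namespace SturmianPaper

variable {A : Type*} [DecidableEq A]

/-- The factor `w` occurs in the infinite word `u` at position `i`. -/
def FactorAt (u : ℕ → A) (w : List A) (i : ℕ) : Prop :=
  w = (List.range w.length).map fun j => u (i + j)

/-- `w` is a factor of the infinite word `u`. -/
def IsFactor (u : ℕ → A) (w : List A) : Prop := ∃ i, FactorAt u w i

/-- The factor complexity of `u`: the number of factors of length `n`. -/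
noncomputable def complexity (u : ℕ → A) (n : ℕ) : ℕ :=
  Set.ncard {w : List A | IsFactor u w ∧ w.length = n}

/-- A Sturmian word: complexity `n + 1` for every `n` (this forces aperiodicity). -/
def IsSturmian (u : ℕ → A) : Prop := ∀ n, complexity u n = n + 1

/-- `u` is eventually periodic. -/
def EventuallyPeriodic (u : ℕ → A) : Prop :=
  ∃ p > 0, ∃ N, ∀ n ≥ N, u (n + p) = u n

/-- `u` is uniformly recurrent: every factor occurs with bounded gaps. -/
def UniformlyRecurrent (u : ℕ → A) : Prop :=
  ∀ w, IsFactor u w → ∃ B, ∀ k, ∃ i, k ≤ i ∧ i < k + B ∧ FactorAt u w i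

/-- The number of occurrences of `w` in the finite word `x`. -/
def occCount (x w : List A) : ℕ :=
  ((List.range (x.length + 1)).filter fun i => decide (w <+: x.drop i)).length

/-- `v` is a return word of the factor `w` of `u`. -/
def IsReturnWord (u : ℕ → A) (w v : List A) : Prop :=
  v ≠ [] ∧ IsFactor u (v ++ w) ∧ w <+: v ++ w ∧ occCount (v ++ w) w = 2

/-- Recurrence function: `R n + 1` is the maximal length of a complete return word
`v ++ w` over factors `w` of length `n` and return words `v` of `w`. -/
noncomputable def recFun (u : ℕ → A) (n : ℕ) : ℕ :=
  sSup {m | ∃ w v, IsFactor u w ∧ w.length = n ∧ IsReturnWord u w v ∧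
    m + 1 = v.length + w.length}

/-- `v = w ^ (|v| / |w|)`: `v` is a fractional power of `w`,
i.e. a prefix of `w w w ⋯` of length at least `|w|`. -/
def FracPow (w v : List A) : Prop :=
  w ≠ [] ∧ w.length ≤ v.length ∧ ∀ i < v.length, v[i]? = w[i % w.length]?

/-- The set of rational exponents `r` (viewed inside `ℝ`) such that `w ^ r ∈ L(u)`. -/
def expSet (u : ℕ → A) (w : List A) : Set ℝ :=
  {r | ∃ v, IsFactor u v ∧ FracPow w v ∧ r = (v.length : ℝ) / (w.length : ℝ)}

/-- The index of the factor `w` in `u`: `sup {r ∈ ℚ | w ^ r ∈ L(u)}`. -/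
noncomputable def index (u : ℕ → A) (w : List A) : ℝ := sSup (expSet u w)

/-- A finite word is primitive if it is not a proper integer power. -/
def Primitive (w : List A) : Prop :=
  w ≠ [] ∧ ∀ (z : List A) (k : ℕ), 2 ≤ k → w ≠ (List.replicate k z).flatten

/-- `w` is left special in `u` (alphabet `Bool`, `true = A`, `false = B`). -/
def LeftSpecial (u : ℕ → Bool) (w : List Bool) : Prop :=
  IsFactor u (true :: w) ∧ IsFactor u (false :: w)

/-- `w` is right special in `u`. -/
def RightSpecial (u : ℕ → Bool) (w : List Bool) : Prop :=
  IsFactor u (w ++ [true]) ∧ IsFactor u (w ++ [false])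

/-- The Sturmian word of slope `α` and intercept `x₀`, coding the orbit of `x₀`
under the exchange of the two intervals `I_A = [0, α)` (coded `true`) and
`I_B = [α, 1)` (coded `false`); the exchange is the rotation `x ↦ x + (1 - α) mod 1`. -/
noncomputable def sturmianWord (α x₀ : ℝ) : ℕ → Bool :=
  fun n => decide (Int.fract (x₀ + n * (1 - α)) < α)

/-- The Sturmian morphism `A ↦ AᶜB`, `B ↦ A` applied to a finite word. -/
def phiW (c : ℕ) (w : List Bool) : List Bool :=
  (w.map fun b => if b then List.replicate c true ++ [false] else [true]).flatten

/-- The Sturmian morphism `A ↦ AᶜB`, `B ↦ A` applied to an infinite word. -/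
noncomputable def phiInf (c : ℕ) (u : ℕ → Bool) : ℕ → Bool :=
  fun n => (phiW c ((List.range (n + 1)).map u)).getD n false

end SturmianPaper

/-!
Let `z` be a longest fractional power of `w` occurring in `u` and `L = |z|`, so that
`|w| ind(w) = L` and the hypothesis reads `R(n) = L + 1` with `n = |w|`. Then consecutive
occurrences of a factor of length `n` are at most `L + 2 - n` apart, so far out every such factor
occurs among the `L + 2 - n` positions following an occurrence of `z`. The windows of length `n`
starting there lie inside `z`, where they are rotations of `w`, except for the last one: hence
`C(n) ≤ n + 1`. By Morse–Hedlund the complexity of an aperiodic word is strictly increasing, so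
`C(m) = m + 1` for all `m ≤ n`, and `n` is arbitrarily large.

If the powers of `w` are unbounded, Lean's `sSup` makes `ind(w) = 0`, and `R(n) = 1` is ruled out
because `R(n) > n` for an aperiodic word.
-/

namespace SturmianPaper

variable {A : Type*} {u : ℕ → A}

def window (u : ℕ → A) (i n : ℕ) : List A := (List.range n).map fun t => u (i + t)

@[simp] lemma length_window (u : ℕ → A) (i n : ℕ) : (window u i n).length = n := by
  simp [window]

@[simp] lemma getElem_window (u : ℕ → A) (i n t : ℕ) (h : t < (window u i n).length) :
    (window u i n)[t] = u (i + t) := by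
  simp [window]

lemma factorAt_iff_eq_window {x : List A} {i : ℕ} : FactorAt u x i ↔ x = window u i x.length :=
  Iff.rfl

lemma factorAt_window (u : ℕ → A) (i n : ℕ) : FactorAt u (window u i n) i := by
  rw [factorAt_iff_eq_window, length_window]

lemma window_eq_window_iff {i j n : ℕ} :
    window u i n = window u j n ↔ ∀ t < n, u (i + t) = u (j + t) := by
  simp [List.ext_get_iff]

lemma window_add (u : ℕ → A) (i a b : ℕ) :
    window u i (a + b) = window u i a ++ window u (i + a) b := by
  simp only [window, List.range_add, List.map_append, List.map_map, Function.comp_def, add_assoc]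

lemma take_window (u : ℕ → A) (i : ℕ) {m n : ℕ} (h : m ≤ n) :
    (window u i n).take m = window u i m := by
  apply List.ext_getElem <;> simp [h]

lemma drop_window (u : ℕ → A) (i m n : ℕ) :
    (window u i n).drop m = window u (i + m) (n - m) := by
  apply List.ext_getElem <;> simp [add_assoc]

lemma prefix_window_iff {x : List A} {i m : ℕ} :
    x <+: window u i m ↔ x.length ≤ m ∧ FactorAt u x i := by
  constructor
  · intro h
    have hlen : x.length ≤ m := by simpa using h.length_le
    refine ⟨hlen, ?_⟩
    rw [factorAt_iff_eq_window, ← take_window u i hlen]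
    exact List.prefix_iff_eq_take.mp h
  · rintro ⟨hlen, hx⟩
    rw [← Nat.add_sub_cancel' hlen, window_add, ← factorAt_iff_eq_window.mp hx]
    exact List.prefix_append _ _

lemma window_append_of_factorAt {x : List A} {i m : ℕ} (hx : FactorAt u x (i + m)) :
    window u i m ++ x = window u i (m + x.length) := by
  rw [window_add, ← factorAt_iff_eq_window.mp hx]

def factorsOfLength (u : ℕ → A) (n : ℕ) : Set (List A) := {x | IsFactor u x ∧ x.length = n}

lemma window_mem_factorsOfLength (u : ℕ → A) (i n : ℕ) :
    window u i n ∈ factorsOfLength u n :=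
  ⟨⟨i, factorAt_window u i n⟩, length_window u i n⟩

lemma factorsOfLength_eq_image_take {m n : ℕ} (h : m ≤ n) :
    factorsOfLength u m = List.take m '' factorsOfLength u n := by
  ext x
  constructor
  · rintro ⟨⟨i, hx⟩, rfl⟩
    exact ⟨window u i n, window_mem_factorsOfLength u i n,
      by rw [take_window u i h, ← factorAt_iff_eq_window.mp hx]⟩
  · rintro ⟨_, ⟨⟨i, hx⟩, rfl⟩, rfl⟩
    rw [factorAt_iff_eq_window.mp hx, take_window u i h]
    exact window_mem_factorsOfLength u i m

lemma finite_factorsOfLength_of_le {m n : ℕ} (h : m ≤ n) (hn : (factorsOfLength u n).Finite) :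
    (factorsOfLength u m).Finite := by
  rw [factorsOfLength_eq_image_take h]
  exact hn.image _

lemma complexity_zero (u : ℕ → A) : complexity u 0 = 1 := by
  have : factorsOfLength u 0 = {[]} := by
    ext x
    simp only [factorsOfLength, Set.mem_ofPred_eq, Set.mem_singleton_iff, List.length_eq_zero_iff,
      and_iff_right_iff_imp]
    rintro rfl
    exact ⟨0, rfl⟩
  exact (congrArg Set.ncard this).trans (Set.ncard_singleton _)

lemma complexity_le_complexity_succ {m : ℕ} (hfin : (factorsOfLength u (m + 1)).Finite) :
    complexity u m ≤ complexity u (m + 1) := by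
  change (factorsOfLength u m).ncard ≤ (factorsOfLength u (m + 1)).ncard
  rw [factorsOfLength_eq_image_take m.le_succ]
  exact Set.ncard_image_le hfin

lemma eventuallyPeriodic_of_window_determines {m : ℕ} (hfin : (factorsOfLength u m).Finite)
    (hdet : ∀ i j, window u i m = window u j m → u (i + m) = u (j + m)) :
    EventuallyPeriodic u := by
  obtain ⟨i, j, hij, hw⟩ :=
    hfin.exists_lt_map_eq_of_forall_mem (window_mem_factorsOfLength u · m)
  have hshift : ∀ t, u (i + t) = u (j + t) := by
    intro t
    induction t using Nat.strong_induction_on with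
    | _ t ih =>
      rcases lt_or_ge t m with ht | ht
      · exact window_eq_window_iff.mp hw t ht
      · have hprev : window u (i + (t - m)) m = window u (j + (t - m)) m :=
          window_eq_window_iff.mpr fun s hs => by
            simpa only [add_assoc] using ih (t - m + s) (by omega)
        simpa only [add_assoc, Nat.sub_add_cancel ht] using hdet _ _ hprev
  refine ⟨j - i, by omega, i, fun n hn => ?_⟩
  calc u (n + (j - i)) = u (j + (n - i)) := congrArg u (by omega)
    _ = u (i + (n - i)) := (hshift _).symm
    _ = u n := congrArg u (by omega)

lemma eventuallyPeriodic_of_complexity_succ_le {m : ℕ} (hfin : (factorsOfLength u (m + 1)).Finite)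
    (hle : complexity u (m + 1) ≤ complexity u m) : EventuallyPeriodic u := by
  have himage := factorsOfLength_eq_image_take (u := u) m.le_succ
  have hinj : Set.InjOn (List.take m) (factorsOfLength u (m + 1)) := by
    rw [← Set.ncard_image_iff hfin, ← himage]
    exact le_antisymm (complexity_le_complexity_succ hfin) hle
  refine eventuallyPeriodic_of_window_determines (finite_factorsOfLength_of_le m.le_succ hfin)
    fun i j hw => ?_
  have hext : window u i (m + 1) = window u j (m + 1) :=
    hinj (window_mem_factorsOfLength u i _) (window_mem_factorsOfLength u j _) <| by
      rwa [take_window u i m.le_succ, take_window u j m.le_succ]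
  exact window_eq_window_iff.mp hext m m.lt_succ_self

lemma complexity_lt_complexity_succ (hap : ¬ EventuallyPeriodic u) {m : ℕ}
    (hfin : (factorsOfLength u (m + 1)).Finite) : complexity u m < complexity u (m + 1) :=
  lt_of_not_ge fun hle => hap (eventuallyPeriodic_of_complexity_succ_le hfin hle)

lemma complexity_add_le (hap : ¬ EventuallyPeriodic u) {N : ℕ}
    (hfin : (factorsOfLength u N).Finite) {m k : ℕ} (hk : m + k ≤ N) :
    complexity u m + k ≤ complexity u (m + k) := by
  induction k with
  | zero => rfl
  | succ k ih =>
    have hfin' := finite_factorsOfLength_of_le (m := m + k + 1) hk hfin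
    have := complexity_lt_complexity_succ hap hfin'
    have := ih (by omega)
    rw [← add_assoc m k 1]
    omega

lemma complexity_eq_of_complexity_le (hap : ¬ EventuallyPeriodic u) {N : ℕ}
    (hfin : (factorsOfLength u N).Finite) (hN : complexity u N ≤ N + 1) {m : ℕ} (hm : m ≤ N) :
    complexity u m = m + 1 := by
  have hlow := complexity_add_le hap hfin (m := 0) (k := m) (by omega)
  have hup := complexity_add_le hap hfin (m := m) (k := N - m) (by omega)
  rw [complexity_zero, zero_add] at hlow
  rw [Nat.add_sub_cancel' hm] at hup
  omega

lemma frequently_factorAt (hur : UniformlyRecurrent u) {x : List A} (hx : IsFactor u x) :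
    ∃ᶠ i in atTop, FactorAt u x i :=
  frequently_atTop.mpr fun k => by
    obtain ⟨B, hB⟩ := hur x hx
    obtain ⟨i, hki, -, hi⟩ := hB k
    exact ⟨i, hki, hi⟩

structure ConsecutiveOccurrences (u : ℕ → A) (x : List A) (a b : ℕ) : Prop where
  lt : a < b
  left : FactorAt u x a
  right : FactorAt u x b
  not_factorAt : ∀ t, a < t → t < b → ¬ FactorAt u x t

lemma exists_consecutiveOccurrences {x : List A} (hx : ∃ᶠ i in atTop, FactorAt u x i)
    {a : ℕ} (ha : FactorAt u x a) : ∃ b, ConsecutiveOccurrences u x a b := by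
  classical
  have hex : ∃ b > a, FactorAt u x b := frequently_atTop'.mp hx a
  obtain ⟨hab, hb⟩ := Nat.find_spec hex
  exact ⟨Nat.find hex, hab, ha, hb, fun t hat htb ht => Nat.find_min hex htb ⟨hat, ht⟩⟩

lemma eventually_exists_factorAt_mem_Ico {x : List A} (hx : ∃ᶠ i in atTop, FactorAt u x i)
    {g : ℕ} (hgap : ∀ a b, ConsecutiveOccurrences u x a b → b - a ≤ g) :
    ∀ᶠ i in atTop, ∃ j ∈ Set.Ico i (i + g), FactorAt u x j := by
  classical
  obtain ⟨a, ha⟩ := hx.exists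
  refine eventually_atTop.mpr ⟨a, fun i hai => ?_⟩
  set last := Nat.findGreatest (FactorAt u x) i
  have hlast : FactorAt u x last := Nat.findGreatest_spec hai ha
  obtain ⟨b, hcons⟩ := exists_consecutiveOccurrences hx hlast
  have hib : i < b := lt_of_not_ge fun hbi => (Nat.le_findGreatest hbi hcons.right).not_gt hcons.lt
  have hgap_b := hgap _ _ hcons
  rcases (Nat.findGreatest_le i : last ≤ i).eq_or_lt with heq | hlt
  · exact ⟨last, ⟨heq.ge, by omega⟩, hlast⟩
  · exact ⟨b, ⟨hib.le, by omega⟩, hcons.right⟩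

def powLengths (u : ℕ → A) (w : List A) : Set ℕ :=
  {m | ∃ v, IsFactor u v ∧ FracPow w v ∧ v.length = m}

lemma fracPow_self {w : List A} (hw : w ≠ []) : FracPow w w :=
  ⟨hw, le_rfl, fun i hi => by rw [Nat.mod_eq_of_lt hi]⟩

/-- Both `sSup`s are `0` on unbounded sets, so the formula holds there too. -/
lemma index_eq_sSup_powLengths_div (u : ℕ → A) (w : List A) :
    index u w = (sSup (powLengths u w) : ℕ) / w.length := by
  have himage : expSet u w = (fun m : ℕ => (m : ℝ) / w.length) '' powLengths u w := by
    ext r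
    constructor
    · rintro ⟨v, hv, hvw, rfl⟩
      exact ⟨v.length, ⟨v, hv, hvw, rfl⟩, rfl⟩
    · rintro ⟨_, ⟨v, hv, hvw, rfl⟩, rfl⟩
      exact ⟨v, hv, hvw, rfl⟩
  rcases (powLengths u w).eq_empty_or_nonempty with hempty | hne
  · simp [index, himage, hempty]
  obtain ⟨-, v₀, -, hv₀, -⟩ := id hne
  have hlen : (0 : ℝ) < w.length := by exact_mod_cast List.length_pos_iff.mpr hv₀.1
  by_cases hbdd : BddAbove (powLengths u w)
  · rw [index, himage]
    refine IsGreatest.csSup_eq ⟨⟨_, Nat.sSup_mem hne hbdd, rfl⟩, ?_⟩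
    rintro r ⟨m, hm, rfl⟩
    exact div_le_div_of_nonneg_right (by exact_mod_cast le_csSup hbdd hm) hlen.le
  · rw [Nat.sSup_of_not_bddAbove hbdd, Nat.cast_zero, zero_div, index]
    refine Real.sSup_of_not_bddAbove fun ⟨M, hM⟩ =>
      hbdd ⟨⌈M * w.length⌉₊, fun m hm => ?_⟩
    have hmM : (m : ℝ) / w.length ≤ M := hM (himage ▸ ⟨m, hm, rfl⟩)
    rw [div_le_iff₀ hlen] at hmM
    exact_mod_cast hmM.trans (Nat.le_ceil _)

lemma FracPow.take_drop_eq_rotate {w z : List A} (h : FracPow w z) {k : ℕ}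
    (hk : k + w.length ≤ z.length) : (z.drop k).take w.length = w.rotate (k % w.length) := by
  apply List.ext_getElem (by simp; omega)
  intro s hs _
  have hs' : s < w.length := (by simpa using hs : _ ∧ _).1
  have hz := h.2.2 (k + s) (by omega)
  rw [List.getElem?_eq_getElem (by omega), List.getElem?_eq_getElem (Nat.mod_lt _ (by omega)),
    Option.some_inj] at hz
  simp only [List.getElem_take, List.getElem_drop, List.getElem_rotate, hz]
  congr 1
  rw [Nat.add_mod_mod, add_comm]

lemma window_eq_rotate {w z : List A} (hz : FracPow w z) {i j : ℕ} (hzi : FactorAt u z i)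
    (hij : i ≤ j) (hj : j + w.length ≤ i + z.length) :
    window u j w.length = w.rotate ((j - i) % w.length) := by
  rw [← hz.take_drop_eq_rotate (by omega), factorAt_iff_eq_window.mp hzi, drop_window,
    take_window _ _ (by omega), Nat.add_sub_cancel' hij]

lemma image_window_Ico_subset {w z : List A} (hz : FracPow w z) {i : ℕ} (hzi : FactorAt u z i) :
    (window u · w.length) '' Set.Ico i (i + (z.length + 2 - w.length)) ⊆
      insert (window u (i + (z.length + 1 - w.length)) w.length)
        (w.rotate '' Set.Iio w.length) := by
  have hw0 : 0 < w.length := List.length_pos_iff.mpr hz.1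
  have hwz := hz.2.1
  rintro _ ⟨j, ⟨hij, hj⟩, rfl⟩
  by_cases hjz : j + w.length ≤ i + z.length
  · exact Or.inr ⟨(j - i) % w.length, Nat.mod_lt _ hw0,
      (window_eq_rotate hz hzi hij hjz).symm⟩
  · exact Or.inl (by congr 1; omega)

lemma finite_and_ncard_le_of_forall_finset {α : Type*} {s : Set α} {m : ℕ}
    (h : ∀ t : Finset α, ↑t ⊆ s → t.card ≤ m) : s.Finite ∧ s.ncard ≤ m := by
  have hs : s.Finite := by
    by_contra hinf
    obtain ⟨t, hts, ht⟩ := Set.Infinite.exists_subset_card_eq hinf (m + 1)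
    have := h t hts
    omega
  refine ⟨hs, ?_⟩
  rw [Set.ncard_eq_toFinset_card s hs]
  exact h _ (by simp)

lemma finite_and_complexity_le_of_gap_le (hur : UniformlyRecurrent u) {w z : List A}
    (hz : IsFactor u z) (hzw : FracPow w z)
    (hgap : ∀ x ∈ factorsOfLength u w.length, ∀ a b,
      ConsecutiveOccurrences u x a b → b - a ≤ z.length + 2 - w.length) :
    (factorsOfLength u w.length).Finite ∧ complexity u w.length ≤ w.length + 1 := by
  refine finite_and_ncard_le_of_forall_finset fun T hT => ?_
  have hwindows : ∀ᶠ i in atTop, ∀ x ∈ T,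
      ∃ j ∈ Set.Ico i (i + (z.length + 2 - w.length)), FactorAt u x j :=
    (eventually_all_finset T).2 fun x hx =>
      eventually_exists_factorAt_mem_Ico (frequently_factorAt hur (hT hx).1) (hgap x (hT hx))
  obtain ⟨i, hiT, hzi⟩ := (hwindows.and_frequently (frequently_factorAt hur hz)).exists
  have hsub : ↑T ⊆ insert (window u (i + (z.length + 1 - w.length)) w.length)
      (w.rotate '' Set.Iio w.length) := by
    intro x hx
    obtain ⟨j, hj, hxj⟩ := hiT x hx
    rw [factorAt_iff_eq_window, (hT hx).2] at hxj
    exact image_window_Ico_subset hzw hzi ⟨j, hj, hxj.symm⟩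
  calc T.card = (T : Set (List A)).ncard := (Set.ncard_coe_finset T).symm
    _ ≤ (insert (window u (i + (z.length + 1 - w.length)) w.length)
          (w.rotate '' Set.Iio w.length)).ncard :=
        Set.ncard_le_ncard hsub (((Set.finite_Iio _).image _).insert _)
    _ ≤ (w.rotate '' Set.Iio w.length).ncard + 1 := Set.ncard_insert_le _ _
    _ ≤ w.length + 1 := by
        have := Set.ncard_image_le (f := w.rotate) (Set.finite_Iio w.length)
        rw [Set.ncard_Iio_nat] at this
        omega

lemma exists_lt_length_of_infinite {S : Set (List A)} (hS : S.Infinite)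
    (hfib : ∀ w ∈ S, {x ∈ S | x.length = w.length}.Finite) (m : ℕ) :
    ∃ w ∈ S, m < w.length := by
  by_contra! hle
  have hlengths : (List.length '' S).Finite :=
    (Set.finite_Iic m).subset (by rintro _ ⟨w, hw, rfl⟩; exact hle w hw)
  have hfibers : (⋃ ℓ ∈ List.length '' S, {x ∈ S | x.length = ℓ}).Finite :=
    hlengths.biUnion fun _ ⟨w, hw, hwℓ⟩ => hwℓ ▸ hfib w hw
  exact hS (hfibers.subset fun x hx => Set.mem_biUnion ⟨x, hx, rfl⟩ ⟨hx, rfl⟩)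

section

variable [DecidableEq A]

lemma occCount_window_eq_two {x : List A} {a b : ℕ} (h : ConsecutiveOccurrences u x a b) :
    occCount (window u a (b - a + x.length)) x = 2 := by
  have hocc : ∀ t ∈ List.range (b - a + x.length + 1),
      decide (x <+: (window u a (b - a + x.length)).drop t) = decide (t = 0 ∨ t = b - a) := by
    intro t ht
    rw [List.mem_range] at ht
    rw [drop_window, decide_eq_decide, prefix_window_iff]
    constructor
    · rintro ⟨hlen, hxt⟩
      by_contra hne
      exact h.not_factorAt (a + t) (by omega) (by omega) hxt
    · rintro (rfl | rfl)
      · exact ⟨by omega, h.left⟩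
      · exact ⟨by omega, by rw [Nat.add_sub_cancel' h.lt.le]; exact h.right⟩
  unfold occCount
  rw [length_window, List.filter_congr hocc,
    ← List.toFinset_card_of_nodup (List.nodup_range.filter _), List.toFinset_filter,
    List.toFinset_range]
  have hpair : (Finset.range (b - a + x.length + 1)).filter (fun t => decide (t = 0 ∨ t = b - a))
      = {0, b - a} := by
    ext t
    simp only [Finset.mem_filter, Finset.mem_range, decide_eq_true_eq, Finset.mem_insert,
      Finset.mem_singleton]
    omega
  rw [hpair, Finset.card_pair (by have := h.lt; omega)]

lemma isReturnWord_window {x : List A} {a b : ℕ}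
    (h : ConsecutiveOccurrences u x a b) : IsReturnWord u x (window u a (b - a)) := by
  have happ : window u a (b - a) ++ x = window u a (b - a + x.length) :=
    window_append_of_factorAt (by rw [Nat.add_sub_cancel' h.lt.le]; exact h.right)
  refine ⟨?_, ?_, ?_, ?_⟩
  · rw [← List.length_pos_iff, length_window]
    exact Nat.sub_pos_of_lt h.lt
  · exact happ ▸ ⟨a, factorAt_window u a _⟩
  · exact happ ▸ prefix_window_iff.mpr ⟨by omega, h.left⟩
  · exact happ ▸ occCount_window_eq_two h

/-- `recFun` is an `sSup` in `ℕ`, which is `0` on an unbounded set. -/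
lemma sub_add_length_le_recFun {x : List A} (hR : recFun u x.length ≠ 0)
    {a b : ℕ} (h : ConsecutiveOccurrences u x a b) :
    b - a + x.length ≤ recFun u x.length + 1 := by
  have hbdd : BddAbove {m | ∃ w v, IsFactor u w ∧ w.length = x.length ∧ IsReturnWord u w v ∧
      m + 1 = v.length + w.length} := by
    by_contra hnb
    exact hR (Nat.sSup_of_not_bddAbove hnb)
  have hab := h.lt
  have hmem := le_csSup hbdd ⟨x, window u a (b - a), ⟨a, h.left⟩, rfl,
    isReturnWord_window h, (by rw [length_window]; omega : b - a + x.length - 1 + 1 = _)⟩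
  exact Nat.le_add_of_sub_le hmem

lemma lt_recFun (hap : ¬ EventuallyPeriodic u) (hur : UniformlyRecurrent u) {n : ℕ} (hn : 0 < n)
    (hR : recFun u n ≠ 0) : n < recFun u n := by
  obtain ⟨a, ha⟩ : ∃ a, u (a + 1) ≠ u a := by
    by_contra! hconst
    exact hap ⟨1, one_pos, 0, fun m _ => hconst m⟩
  obtain ⟨b, hab⟩ := exists_consecutiveOccurrences
    (frequently_factorAt hur ⟨a, factorAt_window u a n⟩) (factorAt_window u a n)
  have hb : b ≠ a + 1 := by
    rintro rfl
    have hw := factorAt_iff_eq_window.mp hab.right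
    rw [length_window] at hw
    exact ha (window_eq_window_iff.mp hw 0 hn).symm
  have hab_lt := hab.lt
  have := sub_add_length_le_recFun (x := window u a n) (by rwa [length_window]) hab
  rw [length_window] at this
  omega

lemma finite_and_complexity_le_of_recFun_eq (hap : ¬ EventuallyPeriodic u)
    (hur : UniformlyRecurrent u) {w : List A} (hw : IsFactor u w) (hw0 : w ≠ [])
    (heq : (recFun u w.length : ℝ) = w.length * index u w + 1) :
    (factorsOfLength u w.length).Finite ∧ complexity u w.length ≤ w.length + 1 := by
  have hn : 0 < w.length := List.length_pos_iff.mpr hw0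
  have hR : recFun u w.length = sSup (powLengths u w) + 1 := by
    rw [index_eq_sSup_powLengths_div, mul_div_cancel₀ _ (by positivity)] at heq
    exact_mod_cast heq
  have hbdd : BddAbove (powLengths u w) := by
    by_contra hnb
    have := lt_recFun hap hur hn (by omega)
    rw [hR, Nat.sSup_of_not_bddAbove hnb] at this
    omega
  obtain ⟨z, hz, hzw, hzlen⟩ : sSup (powLengths u w) ∈ powLengths u w :=
    Nat.sSup_mem ⟨_, w, hw, fracPow_self hw0, rfl⟩ hbdd
  refine finite_and_complexity_le_of_gap_le hur hz hzw fun x ⟨_, hxn⟩ a b hab => ?_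
  have := sub_add_length_le_recFun (by rw [hxn, hR]; omega) hab
  rw [hxn, hR, ← hzlen] at this
  omega

end

/-- if `R(|w|) = |w|·ind(w) + 1` for infinitely many factors `w`
of an aperiodic uniformly recurrent word `u`, then `u` is Sturmian. -/
theorem sturmian_of_recFun_eq {A : Type*} [DecidableEq A]
    (u : ℕ → A) (hap : ¬ EventuallyPeriodic u) (hur : UniformlyRecurrent u)
    (h : {w : List A | IsFactor u w ∧ w ≠ [] ∧
      (recFun u w.length : ℝ) = (w.length : ℝ) * index u w + 1}.Infinite) :
    IsSturmian u := by
  intro m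
  obtain ⟨w, ⟨hw, hw0, heq⟩, hmw⟩ := exists_lt_length_of_infinite h (fun w hw =>
    (finite_and_complexity_le_of_recFun_eq hap hur hw.1 hw.2.1 hw.2.2).1.subset
      fun x hx => ⟨hx.1.1, hx.2⟩) m
  obtain ⟨hfin, hle⟩ := finite_and_complexity_le_of_recFun_eq hap hur hw hw0 heq
  exact complexity_eq_of_complexity_le hap hfin hle hmw.le

end SturmianPaper
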